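/- arXiv:1006.4937 — 4 statements merged into one kernel-verified Lean document; each statement's English description precedes it below -/
import Mathlib

section
/- For every round m, if O_m ≠ ∅ then M_m is a strict subset of M_{m+1}: at least one new link is MARKED in every round in which some link is OPEN. -/
open Classical

/-- Link distance `d(l_u,l_v)`: minimum graph distance between endpoints of the two links. -/
noncomputable def linkDist {V : Type*} (G : SimpleGraph V) (lu lv : V × V) : ℕ :=
  min (min (G.dist lu.1 lv.1) (G.dist lu.1 lv.2))
      (min (G.dist lu.2 lv.1) (G.dist lu.2 lv.2))

/-- A wireless network: a connected simple graph `G` on the node set `V`, a finite set `L`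
of directed links between adjacent nodes, an interference parameter `K ≥ 1`, and
pairwise distinct link prices `lam`. -/
structure Net (V : Type*) where
  G : SimpleGraph V
  conn : G.Connected
  L : Set (V × V)
  Lfin : L.Finite
  adj : ∀ l ∈ L, G.Adj l.1 l.2
  K : ℕ
  hK : 1 ≤ K
  lam : V × V → ℝ
  distinct : ∀ l ∈ L, ∀ l' ∈ L, l ≠ l' → lam l ≠ lam l'

/-- `W` is a `K`-valid matching: distinct links of `W` are at link distance `≥ K`. -/
def KValid {V : Type*} (N : Net V) (W : Set (V × V)) : Prop :=
  ∀ l ∈ W, ∀ l' ∈ W, l ≠ l' → N.K ≤ linkDist N.G l l'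

/-- State of the distributed algorithm: the OPEN, CHECK, MARKED and CLOSED links. -/
structure St (V : Type*) where
  O : Set (V × V)
  H : Set (V × V)
  M : Set (V × V)
  C : Set (V × V)

/-- The OPEN attached links of node `n` (OPEN links whose source is `n`). -/
def openAt {V : Type*} (s : St V) (n : V) : Set (V × V) :=
  {l ∈ s.O | l.1 = n}

/-- `a` selects, at every node `n` having an OPEN attached link, the highest-priced
OPEN attached link `a n` of `n`. -/
def IsSelector {V : Type*} (N : Net V) (s : St V) (a : V → V × V) : Prop :=
  ∀ n, (openAt s n).Nonempty →
    a n ∈ openAt s n ∧ ∀ l ∈ openAt s n, N.lam l ≤ N.lam (a n)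

/-- `R(n)`: the highest-priced OPEN attached links `a n'` of the other nodes `n'` within
`K+1` hops of `n` that have an OPEN attached link. -/
def Rset {V : Type*} (N : Net V) (s : St V) (a : V → V × V) (n : V) : Set (V × V) :=
  {l' | ∃ n', n' ≠ n ∧ N.G.dist n n' ≤ N.K + 1 ∧ (openAt s n').Nonempty ∧ l' = a n'}

/-- Node `n` marks its highest-priced OPEN attached link `a n`: `n` has an OPEN attached
link, and either `R(n) = ∅` or `a n` beats every received price (this disjunction is
expressed by the universally quantified inequality). -/
def MarkCond {V : Type*} (N : Net V) (s : St V) (a : V → V × V) (n : V) : Prop :=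
  (openAt s n).Nonempty ∧ ∀ l' ∈ Rset N s a n, N.lam l' < N.lam (a n)

/-- One round of the distributed greedy algorithm, transforming state `s` into `s'`.
Phase 1: each node `n` with an OPEN attached link either marks `a n` and closes its other
OPEN attached links (when `MarkCond` holds), or moves to CHECK each OPEN attached link
that is interfered with by a strictly higher-priced received link, the rest staying OPEN.
Phase 2: the marked links are added to the MARKED set; every CHECK link interfering with
some MARKED link is closed; then at each node the highest-priced attached link still in
CHECK (if any) becomes OPEN again. -/
def Step {V : Type*} (N : Net V) (s s' : St V) : Prop :=
  ∃ a : V → V × V, IsSelector N s a ∧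
    (let newMarked : Set (V × V) := {l | ∃ n, MarkCond N s a n ∧ l = a n}
     let closed1 : Set (V × V) := {l ∈ s.O | MarkCond N s a l.1 ∧ l ≠ a l.1}
     let newCheck : Set (V × V) :=
       {l ∈ s.O | ¬ MarkCond N s a l.1 ∧
         ∃ l' ∈ Rset N s a l.1, N.lam l < N.lam l' ∧ linkDist N.G l l' < N.K}
     let M' : Set (V × V) := s.M ∪ newMarked
     let pool : Set (V × V) := s.H ∪ newCheck
     let closed2 : Set (V × V) := {l ∈ pool | ∃ j ∈ M', linkDist N.G l j < N.K}
     let rem : Set (V × V) := pool \ closed2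
     let reopened : Set (V × V) := {l ∈ rem | ∀ l' ∈ rem, l'.1 = l.1 → N.lam l' ≤ N.lam l}
     s'.O = (s.O \ (newMarked ∪ closed1 ∪ newCheck)) ∪ reopened ∧
     s'.H = rem \ reopened ∧
     s'.M = M' ∧
     s'.C = s.C ∪ closed1 ∪ closed2)

/-- A trajectory of the distributed greedy algorithm, rounds indexed from `1`:
initially every link of `L` is OPEN, and each round `m ≥ 1` performs one `Step`. -/
def IsTrajectory {V : Type*} (N : Net V) (O H M C : ℕ → Set (V × V)) : Prop :=
  O 1 = N.L ∧ H 1 = ∅ ∧ M 1 = ∅ ∧ C 1 = ∅ ∧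
    ∀ m, 1 ≤ m → Step N ⟨O m, H m, M m, C m⟩ ⟨O (m+1), H (m+1), M (m+1), C (m+1)⟩

/-- Process a list of links in order, starting from `W`, adding a link whenever the
result is still a `K`-valid matching.  Applied to the listing of `L` in strictly
decreasing order of price, this computes the centralized greedy schedule `L_C`. -/
noncomputable def greedyList {V : Type*} (N : Net V) :
    List (V × V) → Set (V × V) → Set (V × V)
  | [], W => W
  | l :: ls, W => greedyList N ls (if KValid N (insert l W) then insert l W else W)


/-!
Among the nodes that still have an OPEN link, the one whose selected link `a n` has the
highest price beats every price it receives (prices are distinct and `a n` is the best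
link of its own node), so it marks `a n`. That link was OPEN, and OPEN links are never
MARKED: a reopened link is a CHECK link that survived Phase 2, hence it interferes with no
MARKED link, in particular (as `K ≥ 1`) it is not one itself.
-/

lemma linkDist_self {V : Type*} (G : SimpleGraph V) (l : V × V) : linkDist G l l = 0 :=
  Nat.eq_zero_of_le_zero <| (min_le_left _ _).trans <| (min_le_left _ _).trans
    (SimpleGraph.dist_self).le

lemma Net.linkDist_self_lt {V : Type*} (N : Net V) (l : V × V) : linkDist N.G l l < N.K := by
  rw [linkDist_self]
  exact N.hK

def St.WellFormed {V : Type*} (N : Net V) (s : St V) : Prop :=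
  s.O ⊆ N.L ∧ s.H ⊆ N.L ∧ Disjoint s.O s.M

lemma markCond_of_forall_le {V : Type*} {N : Net V} {s : St V} {a : V → V × V}
    (hsel : IsSelector N s a) (hOL : s.O ⊆ N.L) {n : V} (hn : (openAt s n).Nonempty)
    (hmax : ∀ n', (openAt s n').Nonempty → N.lam (a n') ≤ N.lam (a n)) :
    MarkCond N s a n := by
  refine ⟨hn, ?_⟩
  rintro _ ⟨n', hn'n, -, hn', rfl⟩
  have han := (hsel n hn).1
  have han' := (hsel n' hn').1
  have hne : a n' ≠ a n := fun h => hn'n (han'.2.symm.trans (h ▸ han.2))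
  exact (hmax n' hn').lt_of_ne (N.distinct _ (hOL han'.1) _ (hOL han.1) hne)

namespace Step

variable {V : Type*} {N : Net V} {s s' : St V}

lemma wellFormed (h : Step N s s') (hs : s.WellFormed N) : s'.WellFormed N := by
  obtain ⟨hOL, hHL, hOM⟩ := hs
  obtain ⟨a, -, hO', hH', hM', -⟩ := h
  have hpool : ∀ {l} {P : Prop}, l ∈ s.H ∨ l ∈ s.O ∧ P → l ∈ N.L := by
    rintro l P (hl | ⟨hl, -⟩)
    exacts [hHL hl, hOL hl]
  refine ⟨?_, ?_, ?_⟩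
  · rw [hO']
    rintro l (⟨hl, -⟩ | ⟨⟨hl, -⟩, -⟩)
    exacts [hOL hl, hpool hl]
  · rw [hH']
    rintro l ⟨⟨hl, -⟩, -⟩
    exact hpool hl
  · rw [hO', hM', Set.disjoint_left]
    rintro l (⟨hlO, hlnot⟩ | ⟨⟨hlpool, hlkept⟩, -⟩) hlM'
    · rcases hlM' with hlM | hlnew
      exacts [Set.disjoint_left.mp hOM hlO hlM, hlnot (Or.inl (Or.inl hlnew))]
    · exact hlkept ⟨hlpool, l, hlM', N.linkDist_self_lt l⟩

lemma marked_ssubset (h : Step N s s') (hs : s.WellFormed N) (hO : s.O.Nonempty) :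
    s.M ⊂ s'.M := by
  obtain ⟨hOL, -, hOM⟩ := hs
  obtain ⟨a, hsel, -, -, hM', -⟩ := h
  obtain ⟨l, hl, hmax⟩ :=
    Set.exists_max_image s.O (fun l => N.lam (a l.1)) (N.Lfin.subset hOL) hO
  have hn : (openAt s l.1).Nonempty := ⟨l, hl, rfl⟩
  have hmark : MarkCond N s a l.1 :=
    markCond_of_forall_le hsel hOL hn fun n' ⟨l', hl', hl'n'⟩ => hl'n' ▸ hmax l' hl'
  have hnew : a l.1 ∉ s.M := Set.disjoint_left.mp hOM (hsel l.1 hn).1.1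
  rw [hM']
  exact ⟨Set.subset_union_left, fun hsub => hnew (hsub (Or.inr ⟨l.1, hmark, rfl⟩))⟩

end Step

lemma IsTrajectory.wellFormed {V : Type*} {N : Net V} {O H M C : ℕ → Set (V × V)}
    (htraj : IsTrajectory N O H M C) {m : ℕ} (hm : 1 ≤ m) :
    St.WellFormed N ⟨O m, H m, M m, C m⟩ := by
  obtain ⟨hO1, hH1, hM1, -, hstep⟩ := htraj
  induction m, hm using Nat.le_induction with
  | base => exact ⟨hO1.le, by simp [hH1], by simp [hM1]⟩
  | succ m hm ih => exact (hstep m hm).wellFormed ih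

theorem stmt3_marked_strictly_grows_general {V : Type*} (N : Net V)
    (O H M C : ℕ → Set (V × V)) (htraj : IsTrajectory N O H M C) :
    ∀ m, 1 ≤ m → (O m).Nonempty → M m ⊂ M (m + 1) := fun m hm hO =>
  (htraj.2.2.2.2 m hm).marked_ssubset (htraj.wellFormed hm) hO

/-- at least one new link is MARKED in every round in which some link
is OPEN: if `O m ≠ ∅` then `M m ⊂ M (m+1)`. -/
theorem stmt3_marked_strictly_grows {V : Type*} [Fintype V] (N : Net V)
    (O H M C : ℕ → Set (V × V)) (htraj : IsTrajectory N O H M C) :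
    ∀ m, 1 ≤ m → (O m).Nonempty → M m ⊂ M (m + 1) :=
  stmt3_marked_strictly_grows_general N O H M C htraj
end

section
/- For every round m and every link i ∈ H_m, there exists a link j ∈ O_m with λ(j) > λ(i): every CHECK link is dominated in price by some OPEN link. -/
open Classical

/-! A CHECK link left over after Phase 2 of a round is not the highest-priced surviving CHECK
link at its source; the one that is gets reopened, so it is OPEN in the next round and beats
it. The maximum exists because every OPEN or CHECK link lies in the finite set `L`. -/

def fiberwiseMaxima {ι κ β : Type*} [LE β] (src : ι → κ) (f : ι → β) (R : Set ι) : Set ι :=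
  {l ∈ R | ∀ l' ∈ R, src l' = src l → f l' ≤ f l}

theorem exists_lt_mem_fiberwiseMaxima {ι κ β : Type*} [LinearOrder β] (src : ι → κ)
    (f : ι → β) {R : Set ι} (hR : R.Finite) {i : ι} (hi : i ∈ R \ fiberwiseMaxima src f R) :
    ∃ j ∈ fiberwiseMaxima src f R, f i < f j := by
  obtain ⟨hiR, hi_max⟩ := hi
  obtain ⟨j, ⟨hjR, hj⟩, hj_max⟩ :=
    Set.exists_max_image {l ∈ R | src l = src i} f (hR.subset fun _ h => h.1) ⟨i, hiR, rfl⟩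
  have hj_max' : ∀ l' ∈ R, src l' = src j → f l' ≤ f j :=
    fun l' hl' hsrc => hj_max l' ⟨hl', hsrc.trans hj⟩
  simp only [fiberwiseMaxima, Set.mem_sep_iff, hiR, true_and, not_forall, not_le] at hi_max
  obtain ⟨l', hl', hsrc, hlt⟩ := hi_max
  exact ⟨j, ⟨hjR, hj_max'⟩, hlt.trans_le (hj_max' l' hl' (hsrc.trans hj.symm))⟩

namespace Step

variable {V : Type*} {N : Net V} {s s' : St V}

/-- `R` is the set of CHECK links surviving Phase 2 and its fiberwise maxima are the links
reopened in Phase 2. -/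
theorem exists_surviving_check (h : Step N s s') :
    ∃ R ⊆ s.O ∪ s.H, s'.H = R \ fiberwiseMaxima Prod.fst N.lam R ∧
      fiberwiseMaxima Prod.fst N.lam R ⊆ s'.O ∧ s'.O ⊆ s.O ∪ R := by
  obtain ⟨a, -, hO, hH, -⟩ := h
  refine ⟨_, fun l hl => ?_, hH, hO ▸ Set.subset_union_right, hO ▸ ?_⟩
  · rcases hl.1 with hl | hl
    · exact .inr hl
    · exact .inl hl.1
  · exact Set.union_subset_union Set.sdiff_subset fun l hl => hl.1

theorem open_union_check_subset (h : Step N s s') : s'.O ∪ s'.H ⊆ s.O ∪ s.H := by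
  obtain ⟨R, hR, hH, -, hO⟩ := h.exists_surviving_check
  rw [hH]
  exact Set.union_subset (hO.trans (Set.union_subset Set.subset_union_left hR))
    (Set.sdiff_subset.trans hR)

theorem exists_open_gt_of_mem_check (h : Step N s s') (hfin : (s.O ∪ s.H).Finite)
    {i : V × V} (hi : i ∈ s'.H) : ∃ j ∈ s'.O, N.lam i < N.lam j := by
  obtain ⟨R, hR, hH, hmax, -⟩ := h.exists_surviving_check
  obtain ⟨j, hj, hlt⟩ := exists_lt_mem_fiberwiseMaxima Prod.fst N.lam (hfin.subset hR) (hH ▸ hi)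
  exact ⟨j, hmax hj, hlt⟩

end Step

theorem IsTrajectory.open_union_check_subset {V : Type*} {N : Net V}
    {O H M C : ℕ → Set (V × V)} (htraj : IsTrajectory N O H M C) {m : ℕ} (hm : 1 ≤ m) :
    O m ∪ H m ⊆ N.L := by
  induction m, hm using Nat.le_induction with
  | base => simp [htraj.1, htraj.2.1]
  | succ m hm ih => exact (htraj.2.2.2.2 m hm).open_union_check_subset.trans ih

theorem stmt6_check_dominated_by_open_general {V : Type*} (N : Net V)
    (O H M C : ℕ → Set (V × V)) (htraj : IsTrajectory N O H M C) :
    ∀ m, 1 ≤ m → ∀ i ∈ H m, ∃ j ∈ O m, N.lam i < N.lam j := by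
  have hfin : ∀ m, 1 ≤ m → (O m ∪ H m).Finite :=
    fun m hm => N.Lfin.subset (htraj.open_union_check_subset hm)
  obtain ⟨-, hH₁, -, -, hstep⟩ := htraj
  intro m hm i hi
  obtain ⟨k, rfl⟩ := Nat.exists_eq_add_of_le' hm
  rcases k with _ | k
  · simp [hH₁] at hi
  · exact (hstep (k + 1) (by omega)).exists_open_gt_of_mem_check (hfin (k + 1) (by omega)) hi

/-- every CHECK link is dominated in price by some OPEN link:
for every round `m` and `i ∈ H m` there is `j ∈ O m` with `λ j > λ i`. -/
theorem stmt6_check_dominated_by_open {V : Type*} [Fintype V] (N : Net V)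
    (O H M C : ℕ → Set (V × V)) (htraj : IsTrajectory N O H M C) :
    ∀ m, 1 ≤ m → ∀ i ∈ H m, ∃ j ∈ O m, N.lam i < N.lam j :=
  stmt6_check_dominated_by_open_general N O H M C htraj
end

section
/- For every round m, no OPEN or CHECK link interferes with any MARKED link: for all l ∈ O_m ∪ H_m and all j ∈ M_m, d(l,j) ≥ K. -/
open Classical

open SimpleGraph

lemma dist_source_le_of_linkDist_lt {V : Type*} {G : SimpleGraph V} (hG : G.Connected)
    {l j : V × V} (hl : G.Adj l.1 l.2) (hj : G.Adj j.1 j.2) {K : ℕ}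
    (h : linkDist G l j < K) : G.dist l.1 j.1 ≤ K + 1 := by
  have hl1 : G.dist l.1 l.2 = 1 := dist_eq_one_iff_adj.2 hl
  have hj1 : G.dist j.2 j.1 = 1 := dist_eq_one_iff_adj.2 hj.symm
  have := hG.dist_triangle (u := l.1) (v := j.2) (w := j.1)
  have := hG.dist_triangle (u := l.1) (v := l.2) (w := j.1)
  have := hG.dist_triangle (u := l.2) (v := j.2) (w := j.1)
  simp only [linkDist, min_lt_iff] at h
  omega

section

variable {V : Type*} {N : Net V} {s s' : St V}

def OpenCheckFarFromMarked (N : Net V) (s : St V) : Prop :=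
  ∀ l ∈ s.O ∪ s.H, ∀ j ∈ s.M, N.K ≤ linkDist N.G l j

/-- An OPEN link interfering with a link marked by another node is outbid by that link,
since the two sources are within `K + 1` hops and so exchange prices. -/
lemma exists_rset_interferer_of_markCond {a : V → V × V} (hsel : IsSelector N s a)
    (hOL : s.O ⊆ N.L) {l : V × V} (hl : l ∈ s.O) {n : V} (hn : MarkCond N s a n)
    (hnl : ¬ MarkCond N s a l.1) (hint : linkDist N.G l (a n) < N.K) :
    ∃ l' ∈ Rset N s a l.1, N.lam l < N.lam l' ∧ linkDist N.G l l' < N.K := by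
  have hne : n ≠ l.1 := fun h => hnl (h ▸ hn)
  obtain ⟨⟨han, hsrc⟩, -⟩ := hsel n hn.1
  have hl1 : (openAt s l.1).Nonempty := ⟨l, hl, rfl⟩
  have hdist : N.G.dist l.1 n ≤ N.K + 1 :=
    hsrc ▸ dist_source_le_of_linkDist_lt N.conn (N.adj l (hOL hl)) (N.adj _ (hOL han)) hint
  have hbeat : N.lam (a l.1) < N.lam (a n) :=
    hn.2 _ ⟨l.1, hne.symm, by rwa [dist_comm], hl1, rfl⟩
  exact ⟨a n, ⟨n, hne, hdist, hn.1, rfl⟩,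
    ((hsel l.1 hl1).2 l ⟨hl, rfl⟩).trans_lt hbeat, hint⟩

lemma Step.open_union_check_subset_s10 (h : Step N s s') : s'.O ∪ s'.H ⊆ s.O ∪ s.H := by
  obtain ⟨a, -, hO, hH, -, -⟩ := h
  intro l hl
  rw [hO, hH] at hl
  simp only [Set.mem_union, Set.mem_sdiff, Set.mem_ofPred_eq] at hl ⊢
  tauto

lemma Step.openCheckFarFromMarked (h : Step N s s') (hOL : s.O ⊆ N.L)
    (hfar : OpenCheckFarFromMarked N s) : OpenCheckFarFromMarked N s' := by
  obtain ⟨a, hsel, hO, hH, hM, -⟩ := h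
  intro l hl j hj
  by_contra! hint
  rw [hM] at hj
  rw [hO, hH] at hl
  rcases hl with (⟨hlO, hsurv⟩ | ⟨⟨hpool, hclose⟩, -⟩) | ⟨⟨hpool, hclose⟩, -⟩
  · have hnl : ¬ MarkCond N s a l.1 := fun hm => by
      by_cases hla : l = a l.1
      · exact hsurv (Or.inl (Or.inl ⟨l.1, hm, hla⟩))
      · exact hsurv (Or.inl (Or.inr ⟨hlO, hm, hla⟩))
    rcases hj with hj | ⟨n, hn, rfl⟩
    · exact (hfar l (Or.inl hlO) j hj).not_gt hint
    · exact hsurv (Or.inr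
        ⟨hlO, hnl, exists_rset_interferer_of_markCond hsel hOL hlO hn hnl hint⟩)
  -- reopened and CHECK links were already tested against every link of the new MARKED set
  all_goals exact hclose ⟨hpool, j, hj, hint⟩

end

theorem stmt10_open_check_far_from_marked_general {V : Type*} (N : Net V)
    (O H M C : ℕ → Set (V × V)) (htraj : IsTrajectory N O H M C) :
    ∀ m, 1 ≤ m → ∀ l ∈ O m ∪ H m, ∀ j ∈ M m, N.K ≤ linkDist N.G l j := by
  obtain ⟨hO1, hH1, hM1, -, hstep⟩ := htraj
  have hsub : ∀ m, 1 ≤ m → O m ∪ H m ⊆ N.L := by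
    intro m hm
    induction m, hm using Nat.le_induction with
    | base => simp [hO1, hH1]
    | succ m hm ih => exact (hstep m hm).open_union_check_subset_s10.trans ih
  intro m hm
  induction m, hm using Nat.le_induction with
  | base => simp [hM1]
  | succ m hm ih =>
    exact (hstep m hm).openCheckFarFromMarked (Set.subset_union_left.trans (hsub m hm)) ih

/-- no OPEN or CHECK link interferes with any MARKED link:
for every round `m`, `l ∈ O m ∪ H m` and `j ∈ M m`, we have `d(l,j) ≥ K`. -/
theorem stmt10_open_check_far_from_marked {V : Type*} [Fintype V] (N : Net V)
    (O H M C : ℕ → Set (V × V)) (htraj : IsTrajectory N O H M C) :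
    ∀ m, 1 ≤ m → ∀ l ∈ O m ∪ H m, ∀ j ∈ M m, N.K ≤ linkDist N.G l j :=
  stmt10_open_check_far_from_marked_general N O H M C htraj
end

section
/- For every round m, M_m ⊆ L_C: every link MARKED by the distributed greedy algorithm at any round belongs to the centralized greedy schedule. -/
open Classical

/-!
Let `L_C` be the centralized greedy schedule. It is characterised by three facts: it is a
`K`-valid matching of links of `L`, and a link of `L` belongs to it as soon as it does not
interfere with any higher-priced link of `L_C`. The distributed algorithm keeps an invariant:
every link of `L_C` is still OPEN, CHECK or MARKED, no OPEN or CHECK link interferes with a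
MARKED one, and every CHECK link is outpriced by an OPEN link at its own source. Hence when a
node `n` marks `a n`, every link of `L_C` interfering with `a n` has its source within `K + 1`
hops of `n`, so its price is bounded by the OPEN price that source sent to `n`, which `a n`
beats; by the characterisation, `a n ∈ L_C`.
-/

section

variable {V : Type*}

lemma linkDist_comm (G : SimpleGraph V) (l j : V × V) : linkDist G l j = linkDist G j l := by
  have h1 : G.dist l.1 j.1 = G.dist j.1 l.1 := G.dist_comm
  have h2 : G.dist l.1 j.2 = G.dist j.2 l.1 := G.dist_comm
  have h3 : G.dist l.2 j.1 = G.dist j.1 l.2 := G.dist_comm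
  have h4 : G.dist l.2 j.2 = G.dist j.2 l.2 := G.dist_comm
  unfold linkDist
  omega

lemma linkDist_le_dist_fst (G : SimpleGraph V) (l j : V × V) :
    linkDist G l j ≤ G.dist l.1 j.1 :=
  (min_le_left _ _).trans (min_le_left _ _)

lemma Net.dist_fst_le_of_linkDist_lt (N : Net V) {l j : V × V} (hl : l ∈ N.L) (hj : j ∈ N.L)
    (h : linkDist N.G l j < N.K) : N.G.dist l.1 j.1 ≤ N.K + 1 := by
  have hal : N.G.dist l.1 l.2 = 1 := SimpleGraph.dist_eq_one_iff_adj.2 (N.adj l hl)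
  have haj : N.G.dist j.2 j.1 = 1 := SimpleGraph.dist_eq_one_iff_adj.2 (N.adj j hj).symm
  have t1 : N.G.dist l.1 j.1 ≤ N.G.dist l.1 j.2 + N.G.dist j.2 j.1 := N.conn.dist_triangle
  have t2 : N.G.dist l.1 j.1 ≤ N.G.dist l.1 l.2 + N.G.dist l.2 j.1 := N.conn.dist_triangle
  have t3 : N.G.dist l.1 j.2 ≤ N.G.dist l.1 l.2 + N.G.dist l.2 j.2 := N.conn.dist_triangle
  unfold linkDist at h
  omega

namespace KValid

variable {N : Net V} {W : Set (V × V)}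

lemma eq_of_linkDist_lt (hW : KValid N W) {l j : V × V} (hl : l ∈ W) (hj : j ∈ W)
    (h : linkDist N.G l j < N.K) : l = j := by
  by_contra hne
  exact (hW l hl j hj hne).not_gt h

protected lemma insert (hW : KValid N W) {l : V × V}
    (hl : ∀ w ∈ W, w ≠ l → N.K ≤ linkDist N.G l w) : KValid N (insert l W) := by
  rintro x (rfl | hx) y (rfl | hy) hxy
  · exact absurd rfl hxy
  · exact hl y hy (Ne.symm hxy)
  · rw [linkDist_comm]
    exact hl x hx hxy
  · exact hW x hx y hy hxy

end KValid

section Greedy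

variable (N : Net V)

lemma subset_greedyList : ∀ (lst : List (V × V)) (W : Set (V × V)), W ⊆ greedyList N lst W
  | [], _ => subset_rfl
  | l :: ls, W => by
    rw [greedyList]
    split
    · exact (Set.subset_insert _ _).trans (subset_greedyList ls _)
    · exact subset_greedyList ls _

lemma greedyList_subset :
    ∀ (lst : List (V × V)) (W : Set (V × V)), greedyList N lst W ⊆ W ∪ {l | l ∈ lst}
  | [], W => by simp [greedyList]
  | l :: ls, W => by
    rw [greedyList]
    refine (greedyList_subset ls _).trans ?_
    split <;> intro x <;> simp +contextual [or_imp]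

lemma KValid.greedyList :
    ∀ (lst : List (V × V)) {W : Set (V × V)}, KValid N W → KValid N (greedyList N lst W)
  | [], _, hW => hW
  | l :: ls, W, hW => by
    rw [_root_.greedyList]
    split
    · exact KValid.greedyList ls ‹_›
    · exact KValid.greedyList ls hW

/-- The induction needs a general starting set `W`, all of whose links outprice `l`. -/
lemma mem_greedyList_of_forall {l : V × V} :
    ∀ {lst : List (V × V)} {W : Set (V × V)}, lst.Pairwise (fun a b => N.lam b < N.lam a) →
      KValid N W → (∀ w ∈ W, N.lam l < N.lam w) → l ∈ lst →
      (∀ l' ∈ greedyList N lst W, N.lam l < N.lam l' → N.K ≤ linkDist N.G l l') →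
      l ∈ greedyList N lst W
  | [], _, _, _, _, hl, _ => absurd hl List.not_mem_nil
  | h :: t, W, hsort, hW, hWlt, hl, hint => by
    rw [List.pairwise_cons] at hsort
    by_cases hhl : h = l
    · subst hhl
      have hins : KValid N (insert h W) :=
        hW.insert fun w hw _ => hint w (subset_greedyList N _ W hw) (hWlt w hw)
      rw [greedyList, if_pos hins]
      exact subset_greedyList N t _ (Set.mem_insert _ _)
    · have hlt : l ∈ t := (List.mem_cons.1 hl).resolve_left (Ne.symm hhl)
      rw [greedyList] at hint ⊢
      refine mem_greedyList_of_forall hsort.2 ?_ ?_ hlt hint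
      · split_ifs with hins
        exacts [hins, hW]
      · split_ifs
        · rintro w (rfl | hw)
          exacts [hsort.1 l hlt, hWlt w hw]
        · exact hWlt

end Greedy

structure IsGreedySchedule (N : Net V) (LC : Set (V × V)) : Prop where
  subset : LC ⊆ N.L
  kValid : KValid N LC
  mem_of_forall : ∀ l ∈ N.L,
    (∀ l' ∈ LC, N.lam l < N.lam l' → N.K ≤ linkDist N.G l l') → l ∈ LC

lemma isGreedySchedule_greedyList (N : Net V) {lst : List (V × V)}
    (hmem : ∀ l, l ∈ lst ↔ l ∈ N.L) (hsort : lst.Pairwise (fun a b => N.lam b < N.lam a)) :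
    IsGreedySchedule N (greedyList N lst ∅) where
  subset l hl := by
    simpa [hmem] using greedyList_subset N lst ∅ hl
  kValid := KValid.greedyList N lst fun _ h => absurd h (Set.notMem_empty _)
  mem_of_forall l hl hint :=
    mem_greedyList_of_forall N hsort (fun _ h => absurd h (Set.notMem_empty _))
      (fun _ h => absurd h (Set.notMem_empty _)) ((hmem l).2 hl) hint

section Round

variable (N : Net V) (s : St V) (a : V → V × V)

def newMarked : Set (V × V) := {l | ∃ n, MarkCond N s a n ∧ l = a n}

def closedByMark : Set (V × V) := {l ∈ s.O | MarkCond N s a l.1 ∧ l ≠ a l.1}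

def newCheck : Set (V × V) :=
  {l ∈ s.O | ¬ MarkCond N s a l.1 ∧
    ∃ l' ∈ Rset N s a l.1, N.lam l < N.lam l' ∧ linkDist N.G l l' < N.K}

def closedByInterference : Set (V × V) :=
  {l ∈ s.H ∪ newCheck N s a | ∃ j ∈ s.M ∪ newMarked N s a, linkDist N.G l j < N.K}

def survivors : Set (V × V) := (s.H ∪ newCheck N s a) \ closedByInterference N s a

def reopened : Set (V × V) :=
  {l ∈ survivors N s a | ∀ l' ∈ survivors N s a, l'.1 = l.1 → N.lam l' ≤ N.lam l}

def nextState : St V where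
  O := (s.O \ (newMarked N s a ∪ closedByMark N s a ∪ newCheck N s a)) ∪ reopened N s a
  H := survivors N s a \ reopened N s a
  M := s.M ∪ newMarked N s a
  C := s.C ∪ closedByMark N s a ∪ closedByInterference N s a

variable {N s}

lemma Step.exists_eq_nextState {s' : St V} (h : Step N s s') :
    ∃ a, IsSelector N s a ∧ s' = nextState N s a := by
  obtain ⟨a, hsel, hO, hH, hM, hC⟩ := h
  refine ⟨a, hsel, ?_⟩
  cases s'
  dsimp only at hO hH hM hC
  subst hO hH hM hC
  rfl

variable {a}

lemma le_linkDist_of_mem_survivors {l j : V × V} (hl : l ∈ survivors N s a)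
    (hj : j ∈ s.M ∪ newMarked N s a) : N.K ≤ linkDist N.G l j := by
  by_contra! hd
  exact hl.2 ⟨hl.1, j, hj, hd⟩

lemma exists_reopened_lt (hL : survivors N s a ⊆ N.L) {l : V × V}
    (hl : l ∈ survivors N s a \ reopened N s a) :
    ∃ l' ∈ reopened N s a, l'.1 = l.1 ∧ N.lam l < N.lam l' := by
  obtain ⟨hls, hlr⟩ := hl
  obtain ⟨w, ⟨hws, hw1⟩, hmax⟩ := Set.exists_max_image {x ∈ survivors N s a | x.1 = l.1} N.lam
    (N.Lfin.subset fun x hx => hL hx.1) ⟨l, hls, rfl⟩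
  have hwr : w ∈ reopened N s a := ⟨hws, fun x hx hx1 => hmax x ⟨hx, hx1.trans hw1⟩⟩
  refine ⟨w, hwr, hw1, (hmax l ⟨hls, rfl⟩).lt_of_ne ?_⟩
  exact N.distinct _ (hL hls) _ (hL hws) (by rintro rfl; exact hlr hwr)

end Round

structure RoundInv (N : Net V) (LC : Set (V × V)) (s : St V) : Prop where
  open_subset : s.O ⊆ N.L
  check_subset : s.H ⊆ N.L
  marked_subset : s.M ⊆ LC
  subset_union : LC ⊆ s.O ∪ s.H ∪ s.M
  le_linkDist : ∀ l ∈ s.O ∪ s.H, ∀ j ∈ s.M, N.K ≤ linkDist N.G l j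
  check_dominated : ∀ l ∈ s.H, ∃ l' ∈ s.O, l'.1 = l.1 ∧ N.lam l < N.lam l'

lemma roundInv_init {N : Net V} {LC : Set (V × V)} (hLC : LC ⊆ N.L) (C : Set (V × V)) :
    RoundInv N LC ⟨N.L, ∅, ∅, C⟩ where
  open_subset := subset_rfl
  check_subset := Set.empty_subset _
  marked_subset := Set.empty_subset _
  subset_union _ hl := Or.inl (Or.inl (hLC hl))
  le_linkDist _ _ _ h := absurd h (Set.notMem_empty _)
  check_dominated _ h := absurd h (Set.notMem_empty _)

namespace RoundInv

variable {N : Net V} {LC : Set (V × V)} {s : St V} {a : V → V × V}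

lemma lam_le_selector (hv : RoundInv N LC s) (hsel : IsSelector N s a) {l : V × V}
    (hl : l ∈ s.O ∪ s.H) : (openAt s l.1).Nonempty ∧ N.lam l ≤ N.lam (a l.1) := by
  obtain ⟨w, hw, hlw⟩ : ∃ w ∈ openAt s l.1, N.lam l ≤ N.lam w := by
    rcases hl with hl | hl
    · exact ⟨l, ⟨hl, rfl⟩, le_rfl⟩
    · obtain ⟨w, hwO, hw1, hlt⟩ := hv.check_dominated l hl
      exact ⟨w, ⟨hwO, hw1⟩, hlt.le⟩
  exact ⟨⟨w, hw⟩, hlw.trans ((hsel _ ⟨w, hw⟩).2 w hw)⟩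

lemma lam_le_of_markCond (hv : RoundInv N LC s) (hsel : IsSelector N s a) {n : V} {l : V × V}
    (hn : MarkCond N s a n) (hl : l ∈ s.O ∪ s.H) (hd : N.G.dist n l.1 ≤ N.K + 1) :
    N.lam l ≤ N.lam (a n) := by
  obtain ⟨hne, hlam⟩ := hv.lam_le_selector hsel hl
  by_cases h : l.1 = n
  · rwa [h] at hlam
  · exact hlam.trans (hn.2 _ ⟨l.1, h, hd, hne, rfl⟩).le

lemma selector_mem_of_markCond (hLC : IsGreedySchedule N LC) (hv : RoundInv N LC s)
    (hsel : IsSelector N s a) {n : V} (hn : MarkCond N s a n) : a n ∈ LC := by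
  obtain ⟨⟨hanO, han⟩, -⟩ := hsel n hn.1
  refine hLC.mem_of_forall _ (hv.open_subset hanO) fun l hl hlt => ?_
  by_contra! hd
  rcases hv.subset_union hl with hlOH | hlM
  · have hdist := N.dist_fst_le_of_linkDist_lt (hv.open_subset hanO) (hLC.subset hl) hd
    rw [han] at hdist
    exact (hv.lam_le_of_markCond hsel hn hlOH hdist).not_gt hlt
  · exact (hv.le_linkDist _ (Or.inl hanO) l hlM).not_gt hd

lemma marked_union_subset (hLC : IsGreedySchedule N LC) (hv : RoundInv N LC s)
    (hsel : IsSelector N s a) : s.M ∪ newMarked N s a ⊆ LC := by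
  rintro l (hl | ⟨n, hn, rfl⟩)
  exacts [hv.marked_subset hl, hv.selector_mem_of_markCond hLC hsel hn]

lemma survivors_subset (hv : RoundInv N LC s) : survivors N s a ⊆ N.L := by
  rintro l ⟨hl | hl, -⟩
  exacts [hv.check_subset hl, hv.open_subset hl.1]

/-- Were `l` to interfere with a newly marked `a n`, then `a n` would be in `R(l.1)` and
outprice `l`, so `l` would have moved to CHECK. -/
lemma le_linkDist_of_mem_remaining (hv : RoundInv N LC s) (hsel : IsSelector N s a)
    {l : V × V} (hl : l ∈ s.O \ (newMarked N s a ∪ closedByMark N s a ∪ newCheck N s a))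
    {j : V × V} (hj : j ∈ s.M ∪ newMarked N s a) : N.K ≤ linkDist N.G l j := by
  obtain ⟨hlO, hl'⟩ := hl
  simp only [Set.mem_union, not_or] at hl'
  obtain ⟨⟨hnotMarked, hnotClosed⟩, hnotCheck⟩ := hl'
  rcases hj with hj | ⟨n, hn, rfl⟩
  · exact hv.le_linkDist l (Or.inl hlO) j hj
  by_contra! hd
  have hlmark : ¬ MarkCond N s a l.1 := fun h => by
    by_cases hla : l = a l.1
    exacts [hnotMarked ⟨l.1, h, hla⟩, hnotClosed ⟨hlO, h, hla⟩]
  have hnl : n ≠ l.1 := by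
    rintro rfl
    exact hlmark hn
  obtain ⟨⟨hanO, han⟩, -⟩ := hsel n hn.1
  have hdist := N.dist_fst_le_of_linkDist_lt (hv.open_subset hlO) (hv.open_subset hanO) hd
  rw [han] at hdist
  have hle := hv.lam_le_of_markCond hsel hn (Or.inl hlO) (by rwa [SimpleGraph.dist_comm])
  have hne : l ≠ a n := by
    rintro rfl
    exact hnl han.symm
  have hlt := hle.lt_of_ne (N.distinct _ (hv.open_subset hlO) _ (hv.open_subset hanO) hne)
  exact hnotCheck ⟨hlO, hlmark, a n, ⟨n, hnl, hdist, hn.1, rfl⟩, hlt, hd⟩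

lemma mem_nextState_of_mem_check (hLC : IsGreedySchedule N LC) (hv : RoundInv N LC s)
    (hsel : IsSelector N s a) {l : V × V} (hl : l ∈ s.H ∪ newCheck N s a) (hlLC : l ∈ LC) :
    l ∈ (nextState N s a).O ∪ (nextState N s a).H ∪ (nextState N s a).M := by
  by_cases hclosed : l ∈ closedByInterference N s a
  · obtain ⟨-, j, hj, hd⟩ := hclosed
    have hlj := hLC.kValid.eq_of_linkDist_lt hlLC (hv.marked_union_subset hLC hsel hj) hd
    exact Or.inr (hlj ▸ hj)
  · by_cases hre : l ∈ reopened N s a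
    · exact Or.inl (Or.inl (Or.inr hre))
    · exact Or.inl (Or.inr ⟨⟨hl, hclosed⟩, hre⟩)

lemma subset_union_nextState (hLC : IsGreedySchedule N LC) (hv : RoundInv N LC s)
    (hsel : IsSelector N s a) :
    LC ⊆ (nextState N s a).O ∪ (nextState N s a).H ∪ (nextState N s a).M := by
  intro l hlLC
  rcases hv.subset_union hlLC with (hlO | hlH) | hlM
  · by_cases hcheck : l ∈ newCheck N s a
    · exact hv.mem_nextState_of_mem_check hLC hsel (Or.inr hcheck) hlLC
    by_cases hmarked : l ∈ newMarked N s a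
    · exact Or.inr (Or.inr hmarked)
    have hclosed : l ∉ closedByMark N s a := by
      rintro ⟨-, hmc, hla⟩
      have haLC := hv.selector_mem_of_markCond hLC hsel hmc
      obtain ⟨⟨-, ha1⟩, -⟩ := hsel l.1 hmc.1
      have hd : linkDist N.G l (a l.1) < N.K := by
        have := linkDist_le_dist_fst N.G l (a l.1)
        rw [ha1, SimpleGraph.dist_self] at this
        have := N.hK
        omega
      exact hla (hLC.kValid.eq_of_linkDist_lt hlLC haLC hd)
    exact Or.inl (Or.inl (Or.inl ⟨hlO, by simp [hcheck, hmarked, hclosed]⟩))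
  · exact hv.mem_nextState_of_mem_check hLC hsel (Or.inl hlH) hlLC
  · exact Or.inr (Or.inl hlM)

lemma nextState (hLC : IsGreedySchedule N LC) (hv : RoundInv N LC s)
    (hsel : IsSelector N s a) : RoundInv N LC (nextState N s a) where
  open_subset := by
    rintro l (⟨hl, -⟩ | hl)
    exacts [hv.open_subset hl, hv.survivors_subset hl.1]
  check_subset _ hl := hv.survivors_subset hl.1
  marked_subset := hv.marked_union_subset hLC hsel
  subset_union := hv.subset_union_nextState hLC hsel
  le_linkDist := by
    rintro l ((hl | hl) | hl) j hj
    · exact hv.le_linkDist_of_mem_remaining hsel hl hj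
    · exact le_linkDist_of_mem_survivors hl.1 hj
    · exact le_linkDist_of_mem_survivors hl.1 hj
  check_dominated l hl := by
    obtain ⟨l', hl', hl'1, hlt⟩ := exists_reopened_lt hv.survivors_subset hl
    exact ⟨l', Or.inr hl', hl'1, hlt⟩

end RoundInv

end

theorem stmt11_marked_subset_centralized_general {V : Type*} (N : Net V)
    (O H M C : ℕ → Set (V × V)) (htraj : IsTrajectory N O H M C)
    (lst : List (V × V)) (hmem : ∀ l, l ∈ lst ↔ l ∈ N.L)
    (hsort : lst.Pairwise (fun a b => N.lam b < N.lam a)) :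
    ∀ m, 1 ≤ m → M m ⊆ greedyList N lst ∅ := by
  obtain ⟨hO1, hH1, hM1, -, hstep⟩ := htraj
  have hLC := isGreedySchedule_greedyList N hmem hsort
  suffices hinv : ∀ m, 1 ≤ m → RoundInv N (greedyList N lst ∅) ⟨O m, H m, M m, C m⟩ from
    fun m hm => (hinv m hm).marked_subset
  intro m hm
  induction m, hm using Nat.le_induction with
  | base =>
    rw [hO1, hH1, hM1]
    exact roundInv_init hLC.subset _
  | succ m hm ih =>
    obtain ⟨a, hsel, heq⟩ := (hstep m hm).exists_eq_nextState
    rw [heq]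
    exact ih.nextState hLC hsel

/-- every link MARKED by the distributed greedy algorithm at any round
belongs to the centralized greedy schedule `L_C = greedyList N lst ∅`, where `lst`
lists the links of `L` in strictly decreasing order of price. -/
theorem stmt11_marked_subset_centralized {V : Type*} [Fintype V] (N : Net V)
    (O H M C : ℕ → Set (V × V)) (htraj : IsTrajectory N O H M C)
    (lst : List (V × V)) (hmem : ∀ l, l ∈ lst ↔ l ∈ N.L)
    (hsort : lst.Pairwise (fun a b => N.lam b < N.lam a)) :
    ∀ m, 1 ≤ m → M m ⊆ greedyList N lst ∅ :=
  stmt11_marked_subset_centralized_general N O H M C htraj lst hmem hsort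
end
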